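/- Let G be a locally compact Hausdorff topological group with right Haar measure μ, and let (Λ_λ) be a Følner net in G, i.e. a net of Borel subsets of G with 0 < μ(Λ_λ) < ∞ for every λ and lim_λ μ(Λ_λ Δ (Λ_λ g))/μ(Λ_λ) = 0 for every g ∈ G. Let H be a complex Hilbert space and let U : G → B(H) satisfy ‖U_g‖ ≤ 1 and U_g U_h = U_{gh} for all g, h ∈ G, and assume that for all x, y ∈ H the function g ↦ ⟨y, U_g x⟩ is Borel measurable. Let V = {x ∈ H : U_g x = x for all g ∈ G} and let P be the orthogonal projection of H onto V. Then for all x, y ∈ H, lim_λ (1/μ(Λ_λ)) ∫_{Λ_λ} ⟨y, U_g x⟩ dμ(g) = ⟨y, Px⟩. -/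

import Mathlib

/-!
For fixed `y`, the averages `x ↦ ⨍ g in Λ i, ⟪y, U g x⟫` are continuous linear functionals of
norm at most `‖y‖`. They equal `⟪y, x⟫` on fixed vectors. On a coboundary `U h v - v`, right
invariance of `μ` turns the difference of averages into integrals over `Λ i \ Λ i h` and
`Λ i h \ Λ i`, which are small relative to `μ (Λ i)` by the Følner condition. Uniform
boundedness carries the convergence to zero over to the closed span of the coboundaries, and
`x - P x` lies there: a vector `z` orthogonal to all coboundaries satisfies `(U g)† z = z`,
hence `U g z = z` since `U g` is a contraction.
-/

open Filter MeasureTheory Set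
open scoped InnerProductSpace Topology ENNReal symmDiff

section SetIntegral

variable {α E : Type*} [MeasurableSpace α] {μ : Measure α} [NormedAddCommGroup E]
  [NormedSpace ℝ E] {f : α → E} {s t : Set α} {C : ℝ}

theorem norm_setAverage_le_of_norm_le_const (hC₀ : 0 ≤ C) (hC : ∀ x ∈ s, ‖f x‖ ≤ C)
    (hs : μ s < ∞) : ‖⨍ x in s, f x ∂μ‖ ≤ C := by
  rw [setAverage_eq, norm_smul, norm_inv, Real.norm_of_nonneg measureReal_nonneg]
  rcases (measureReal_nonneg (μ := μ) (s := s)).eq_or_lt with hs₀ | hs₀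
  · simpa [← hs₀] using hC₀
  · rw [inv_mul_le_iff₀ hs₀, mul_comm]
    exact norm_setIntegral_le_of_norm_le_const hs hC

theorem norm_setIntegral_sub_setIntegral_le (hs : MeasurableSet s) (ht : MeasurableSet t)
    (hsμ : μ s ≠ ∞) (htμ : μ t ≠ ∞) (hfs : IntegrableOn f s μ) (hft : IntegrableOn f t μ)
    (hC : ∀ x ∈ s ∆ t, ‖f x‖ ≤ C) :
    ‖∫ x in s, f x ∂μ - ∫ x in t, f x ∂μ‖ ≤ C * μ.real (s ∆ t) := by
  have hsplit : ∫ x in s, f x ∂μ - ∫ x in t, f x ∂μ =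
      ∫ x in s \ t, f x ∂μ - ∫ x in t \ s, f x ∂μ := by
    rw [← integral_inter_add_sdiff ht hfs, ← integral_inter_add_sdiff hs hft, inter_comm t s]
    abel
  calc ‖∫ x in s, f x ∂μ - ∫ x in t, f x ∂μ‖
      ≤ ‖∫ x in s \ t, f x ∂μ‖ + ‖∫ x in t \ s, f x ∂μ‖ := hsplit ▸ norm_sub_le _ _
    _ ≤ C * μ.real (s \ t) + C * μ.real (t \ s) := by
      gcongr <;> refine norm_setIntegral_le_of_norm_le_const
        (measure_lt_top_of_subset sdiff_subset ‹_›) fun x hx => hC x ?_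
      exacts [Or.inl hx, Or.inr hx]
    _ = C * μ.real (s ∆ t) := by rw [measureReal_symmDiff_eq hs ht hsμ htμ, mul_add]

end SetIntegral

section RightInvariant

variable {G E : Type*} [Group G] [MeasurableSpace G] [MeasurableMul G] {μ : Measure G}
  [μ.IsMulRightInvariant] [NormedAddCommGroup E] [NormedSpace ℝ E]

theorem setIntegral_comp_mul_right (f : G → E) (s : Set G) (h : G) :
    ∫ g in s, f (g * h) ∂μ = ∫ g in (· * h) '' s, f g ∂μ := by
  rw [← (measurePreserving_mul_right μ h).setIntegral_preimage_emb
    (MeasurableEquiv.mulRight h).measurableEmbedding f ((· * h) '' s),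
    preimage_image_eq _ (mul_left_injective h)]

theorem norm_setAverage_comp_mul_right_sub_le {f : G → E} {C : ℝ}
    (hf : AEStronglyMeasurable f μ) (hC : ∀ g, ‖f g‖ ≤ C) {s : Set G} (hs : MeasurableSet s)
    (hsμ : μ s ≠ ∞) (h : G) :
    ‖⨍ g in s, f (g * h) ∂μ - ⨍ g in s, f g ∂μ‖ ≤ C * (μ (s ∆ ((· * h) '' s)) / μ s).toReal := by
  have hts : (· * h) '' s = (· * h⁻¹) ⁻¹' s := image_mul_right
  have ht : MeasurableSet ((· * h) '' s) := hts ▸ hs.preimage (measurable_mul_const h⁻¹)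
  have htμ : μ ((· * h) '' s) = μ s := by rw [hts, measure_preimage_mul_right]
  have hint : ∀ t, μ t ≠ ∞ → IntegrableOn f t μ := fun t htμ =>
    Measure.integrableOn_of_bounded htμ hf (ae_of_all _ hC)
  rw [setAverage_eq, setAverage_eq, ← smul_sub, setIntegral_comp_mul_right, norm_smul, norm_inv,
    Real.norm_of_nonneg measureReal_nonneg, ENNReal.toReal_div, ← measureReal_def,
    ← measureReal_def, div_eq_inv_mul, mul_left_comm, symmDiff_comm]
  gcongr
  exact norm_setIntegral_sub_setIntegral_le ht hs (htμ ▸ hsμ) hsμ (hint _ (htμ ▸ hsμ))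
    (hint _ hsμ) fun g _ => hC g

theorem tendsto_setAverage_comp_mul_right_sub {ι : Type*} {l : Filter ι} {Λ : ι → Set G}
    (hΛ : ∀ i, MeasurableSet (Λ i)) (hΛμ : ∀ i, μ (Λ i) ≠ ∞) {h : G}
    (hFolner : Tendsto (fun i => μ (Λ i ∆ ((· * h) '' Λ i)) / μ (Λ i)) l (𝓝 0))
    {f : G → E} {C : ℝ} (hf : AEStronglyMeasurable f μ) (hC : ∀ g, ‖f g‖ ≤ C) :
    Tendsto (fun i => ⨍ g in Λ i, f (g * h) ∂μ - ⨍ g in Λ i, f g ∂μ) l (𝓝 0) := by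
  refine squeeze_zero_norm
    (fun i => norm_setAverage_comp_mul_right_sub_le hf hC (hΛ i) (hΛμ i) h) ?_
  simpa using ((ENNReal.tendsto_toReal ENNReal.zero_ne_top).comp hFolner).const_mul C

end RightInvariant

section Functional

variable {𝕜 E : Type*} [RCLike 𝕜] [NormedAddCommGroup E]

theorem exists_continuousLinearMap_apply_eq_setAverage [NormedSpace 𝕜 E] {α : Type*}
    [MeasurableSpace α] {μ : Measure α} {φ : α → StrongDual 𝕜 E} {C : ℝ} (hC : 0 ≤ C)
    (hφ : ∀ a, ‖φ a‖ ≤ C) (hmeas : ∀ x, AEStronglyMeasurable (φ · x) μ) {s : Set α}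
    (hs : μ s ≠ ∞) :
    ∃ A : StrongDual 𝕜 E, ‖A‖ ≤ C ∧ ∀ x, A x = ⨍ a in s, φ a x ∂μ := by
  have hbound : ∀ a x, ‖φ a x‖ ≤ C * ‖x‖ := fun a => (φ a).le_of_opNorm_le (hφ a)
  have hint : ∀ x, IntegrableOn (φ · x) s μ := fun x =>
    Measure.integrableOn_of_bounded hs (hmeas x) (ae_of_all _ fun a => hbound a x)
  let L : E →ₗ[𝕜] 𝕜 :=
    { toFun x := ⨍ a in s, φ a x ∂μ
      map_add' x y := by
        simp only [map_add, setAverage_eq, integral_add (hint x) (hint y), smul_add]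
      map_smul' c x := by
        simp only [map_smul, smul_eq_mul, setAverage_eq, integral_const_mul, RingHom.id_apply]
        rw [mul_smul_comm] }
  refine ⟨L.mkContinuous C fun x => ?_, LinearMap.mkContinuous_norm_le _ hC _, fun x => rfl⟩
  exact norm_setAverage_le_of_norm_le_const (by positivity) (fun a _ => hbound a x) hs.lt_top

theorem tendsto_zero_of_mem_closure_span [NormedSpace 𝕜 E] {F : Type*} [NormedAddCommGroup F]
    [NormedSpace 𝕜 F] {ι : Type*} {l : Filter ι} {A : ι → E →L[𝕜] F} {C : ℝ}
    (hA : ∀ i, ‖A i‖ ≤ C) {s : Set E} (hs : ∀ w ∈ s, Tendsto (fun i => A i w) l (𝓝 0)) {w : E}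
    (hw : w ∈ (Submodule.span 𝕜 s).topologicalClosure) :
    Tendsto (fun i => A i w) l (𝓝 0) := by
  have hequi : Equicontinuous ((↑) ∘ A) :=
    ((NormedSpace.equicontinuous_TFAE A).out 5 1).mp (⟨C, hA⟩ : ∃ C, ∀ i, ‖A i‖ ≤ C)
  refine closure_minimal (fun w hw => ?_) (hequi.isClosed_setOfPred_tendsto continuous_const) hw
  induction hw using Submodule.span_induction with
  | mem w hw => exact hs w hw
  | zero => simpa using tendsto_const_nhds
  | add u v _ _ hu hv => simpa using hu.add hv
  | smul c u _ hu => simpa using hu.const_smul c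

variable [InnerProductSpace 𝕜 E]

theorem ContinuousLinearMap.apply_eq_self_of_inner_sub_eq_zero {T : E →L[𝕜] E} (hT : ‖T‖ ≤ 1)
    {z : E} (hz : ∀ v, ⟪T v - v, z⟫_𝕜 = 0) : T z = z := by
  refine eq_of_norm_le_re_inner_eq_norm_sq (𝕜 := 𝕜) (by simpa using T.le_of_opNorm_le hT z) ?_
  have hfix := hz z
  rw [inner_sub_left, sub_eq_zero] at hfix
  rw [hfix, inner_self_eq_norm_sq]

theorem sub_mem_closure_span_coboundaries [CompleteSpace E] {G : Type*} {U : G → E →L[𝕜] E}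
    (hU : ∀ g, ‖U g‖ ≤ 1) {x p : E} (hp : ∀ v, (∀ g, U g v = v) → ⟪x - p, v⟫_𝕜 = 0) :
    x - p ∈ (Submodule.span 𝕜 {w | ∃ g v, U g v - v = w}).topologicalClosure := by
  rw [← Submodule.orthogonal_orthogonal_eq_closure, Submodule.mem_orthogonal]
  intro z hz
  refine inner_eq_zero_symm.1 (hp z fun g => (U g).apply_eq_self_of_inner_sub_eq_zero (hU g) ?_)
  exact fun v => (Submodule.mem_orthogonal _ z).1 hz _ (Submodule.subset_span ⟨g, v, rfl⟩)

end Functional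

section Representation

variable {G 𝕜 H : Type*} [Group G] [MeasurableSpace G] [MeasurableMul G] {μ : Measure G}
  [μ.IsMulRightInvariant] [RCLike 𝕜] [NormedAddCommGroup H] [InnerProductSpace 𝕜 H]

theorem tendsto_setAverage_inner_apply_sub {ι : Type*} {l : Filter ι} {Λ : ι → Set G}
    (hΛ : ∀ i, MeasurableSet (Λ i)) (hΛμ : ∀ i, μ (Λ i) ≠ ∞) {h : G}
    (hFolner : Tendsto (fun i => μ (Λ i ∆ ((· * h) '' Λ i)) / μ (Λ i)) l (𝓝 0))
    {U : G → H →L[𝕜] H} (hU : ∀ g, ‖U g‖ ≤ 1) (hUmul : ∀ g, U g ∘L U h = U (g * h)) {y v : H}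
    (hmeas : Measurable fun g => ⟪y, U g v⟫_𝕜) :
    Tendsto (fun i => ⨍ g in Λ i, ⟪y, U g (U h v)⟫_𝕜 ∂μ - ⨍ g in Λ i, ⟪y, U g v⟫_𝕜 ∂μ) l
      (𝓝 0) := by
  have hcoeff_le : ∀ g, ‖⟪y, U g v⟫_𝕜‖ ≤ ‖y‖ * ‖v‖ := fun g =>
    (norm_inner_le_norm y _).trans (by gcongr; simpa using (U g).le_of_opNorm_le (hU g) v)
  simpa only [← hUmul, ContinuousLinearMap.comp_apply] using
    tendsto_setAverage_comp_mul_right_sub hΛ hΛμ hFolner hmeas.aestronglyMeasurable hcoeff_le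

end Representation

theorem weak_mean_ergodic_theorem_folner_net_general
    {G : Type*} [Group G] [TopologicalSpace G] [IsTopologicalGroup G]
    [MeasurableSpace G] [BorelSpace G]
    (μ : Measure G) [μ.IsMulRightInvariant]
    {ι : Type*} [Preorder ι]
    (Λ : ι → Set G) (hΛmeas : ∀ i, MeasurableSet (Λ i))
    (hΛpos : ∀ i, 0 < μ (Λ i)) (hΛfin : ∀ i, μ (Λ i) < ∞)
    (hFolner : ∀ g : G,
      Tendsto (fun i => μ (symmDiff (Λ i) ((· * g) '' Λ i)) / μ (Λ i))
        atTop (𝓝 0))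
    {H : Type*} [NormedAddCommGroup H] [InnerProductSpace ℂ H] [CompleteSpace H]
    (U : G → H →L[ℂ] H)
    (hUcontr : ∀ g, ‖U g‖ ≤ 1)
    (hUmul : ∀ g h : G, U g ∘L U h = U (g * h))
    (hUmeas : ∀ x y : H, Measurable fun g => ⟪y, U g x⟫_ℂ)
    (P : H →L[ℂ] H)
    (hPmem : ∀ x : H, ∀ g : G, U g (P x) = P x)
    (hPorth : ∀ x v : H, (∀ g : G, U g v = v) → ⟪x - P x, v⟫_ℂ = 0) :
    ∀ x y : H,
      Tendsto (fun i => (μ (Λ i)).toReal⁻¹ • ∫ g in Λ i, ⟪y, U g x⟫_ℂ ∂μ)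
        atTop (𝓝 ⟪y, P x⟫_ℂ) := by
  intro x y
  have hφ : ∀ g, ‖innerSL ℂ y ∘L U g‖ ≤ ‖y‖ := fun g =>
    (ContinuousLinearMap.opNorm_comp_le _ _).trans <| by
      rw [innerSL_apply_norm]; exact mul_le_of_le_one_right (norm_nonneg y) (hUcontr g)
  choose A hA_norm hA_apply using fun i => exists_continuousLinearMap_apply_eq_setAverage
    (μ := μ) (norm_nonneg y) hφ (fun v => (hUmeas v y).aestronglyMeasurable) (hΛfin i).ne
  simp only [ContinuousLinearMap.comp_apply, innerSL_apply_apply] at hA_apply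
  have hA_fixed : ∀ i, A i (P x) = ⟪y, P x⟫_ℂ := fun i => by
    simp only [hA_apply, hPmem]
    exact setAverage_const (hΛpos i).ne' (hΛfin i).ne _
  have hA_coboundary : ∀ w ∈ {w | ∃ g v, U g v - v = w}, Tendsto (A · w) atTop (𝓝 0) := by
    rintro _ ⟨h, v, rfl⟩
    refine (tendsto_setAverage_inner_apply_sub hΛmeas (fun i => (hΛfin i).ne) (hFolner h)
      hUcontr (hUmul · h) (hUmeas v y)).congr fun i => ?_
    rw [map_sub, hA_apply, hA_apply]
  have hA_ker : Tendsto (A · (x - P x)) atTop (𝓝 0) := tendsto_zero_of_mem_closure_span hA_norm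
    hA_coboundary (sub_mem_closure_span_coboundaries hUcontr (hPorth x))
  have hA_eq : ∀ i, (μ (Λ i)).toReal⁻¹ • ∫ g in Λ i, ⟪y, U g x⟫_ℂ ∂μ
      = ⟪y, P x⟫_ℂ + A i (x - P x) := fun i => by
    rw [map_sub, hA_fixed, add_sub_cancel, hA_apply, setAverage_eq, measureReal_def]
  simpa only [hA_eq, add_zero] using hA_ker.const_add ⟪y, P x⟫_ℂ

/-- Weak mean ergodic theorem: for a right-Haar measure `μ` on a locally compact
Hausdorff group `G`, a Følner net `(Λ_λ)`, and a weakly measurable contraction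
representation `U` of `G` on a complex Hilbert space `H`, one has
`(1/μ(Λ_λ)) ∫_{Λ_λ} ⟨y, U_g x⟩ dμ(g) → ⟨y, P x⟩` for all `x, y ∈ H`, where `P`
is the orthogonal projection onto `V = {x : U_g x = x ∀ g}`. -/
theorem weak_mean_ergodic_theorem_folner_net
    {G : Type*} [Group G] [TopologicalSpace G] [IsTopologicalGroup G]
    [LocallyCompactSpace G] [T2Space G] [MeasurableSpace G] [BorelSpace G]
    (μ : Measure G) [μ.Regular] [μ.IsMulRightInvariant] (hμ : μ ≠ 0)
    {ι : Type*} [Preorder ι] [IsDirected ι (· ≤ ·)] [Nonempty ι]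
    (Λ : ι → Set G) (hΛmeas : ∀ i, MeasurableSet (Λ i))
    (hΛpos : ∀ i, 0 < μ (Λ i)) (hΛfin : ∀ i, μ (Λ i) < ∞)
    (hFolner : ∀ g : G,
      Tendsto (fun i => μ (symmDiff (Λ i) ((· * g) '' Λ i)) / μ (Λ i))
        atTop (𝓝 0))
    {H : Type*} [NormedAddCommGroup H] [InnerProductSpace ℂ H] [CompleteSpace H]
    (U : G → H →L[ℂ] H)
    (hUcontr : ∀ g, ‖U g‖ ≤ 1)
    (hUmul : ∀ g h : G, U g ∘L U h = U (g * h))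
    (hUmeas : ∀ x y : H, Measurable fun g => ⟪y, U g x⟫_ℂ)
    (P : H →L[ℂ] H)
    (hPmem : ∀ x : H, ∀ g : G, U g (P x) = P x)
    (hPorth : ∀ x v : H, (∀ g : G, U g v = v) → ⟪x - P x, v⟫_ℂ = 0) :
    ∀ x y : H,
      Tendsto (fun i => (μ (Λ i)).toReal⁻¹ • ∫ g in Λ i, ⟪y, U g x⟫_ℂ ∂μ)
        atTop (𝓝 ⟪y, P x⟫_ℂ) :=
  weak_mean_ergodic_theorem_folner_net_general μ Λ hΛmeas hΛpos hΛfin hFolner U hUcontr hUmul hUmeas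
    P hPmem hPorth
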